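/- Let Erfc : ℂ → ℂ be the entire function Erfc(z) = √π/2 − ∫_{[0,z]} e^{−w²} dw. Then for every ε with 0 < ε < π/4, |Erfc(z)| → +∞ as z → ∞ in the sector π/4 + ε < arg z ≤ π/2; that is, for every M > 0 there exists R > 0 such that every z ∈ ℂ with |z| ≥ R and π/4 + ε < arg z ≤ π/2 satisfies |Erfc(z)| ≥ M. -/

import Mathlib

/-!
In the sector, `a := -Re(z²) ≥ sin(2ε)‖z‖²`, so `e^{-z²}` is exponentially large. Split
`∫₀¹ z e^{-(tz)²} dt` at `t = 3/4`. The piece over `[0, 3/4]` is at most `‖z‖ e^{9a/16}`.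
On `[3/4, 1]`, integrating by parts against `d/dt e^{-(tz)²} = -2tz² e^{-(tz)²}` isolates the
boundary term `e^{-z²}/(2z)`, of norm `e^a/(2‖z‖)`, while the remaining integral is at most
`(2/9) e^a/‖z‖`. Hence `‖Erfc z‖ ≥ (5/18) e^a/‖z‖ - 2‖z‖ e^{9a/16} - √π/2`, and the right-hand
side tends to infinity since `a` grows like `‖z‖²`.
-/

open Complex intervalIntegral Filter Topology

noncomputable def CErfc (z : ℂ) : ℂ :=
  (Real.sqrt Real.pi : ℂ) / 2 - ∫ t in (0:ℝ)..1, z * Complex.exp (-((t : ℂ) * z) ^ 2)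

lemma hasDerivAt_neg_cexp_neg_sq_div {z : ℂ} (hz : z ≠ 0) {t : ℝ} (ht : t ≠ 0) :
    HasDerivAt (fun t : ℝ => -exp (-((t : ℂ) * z) ^ 2) / (2 * t * z))
      (z * exp (-((t : ℂ) * z) ^ 2) + exp (-((t : ℂ) * z) ^ 2) / (2 * t ^ 2 * z)) t := by
  have hlin : HasDerivAt (fun t : ℝ => (t : ℂ) * z) z t := by
    simpa using (hasDerivAt_id t).ofReal_comp.mul_const z
  have hexp := (hlin.fun_pow 2).fun_neg.cexp
  have hden : HasDerivAt (fun t : ℝ => 2 * (t : ℂ) * z) (2 * z) t := by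
    simpa [mul_assoc] using hlin.const_mul 2
  have htz : 2 * (t : ℂ) * z ≠ 0 := by simp [hz, ht]
  refine (hexp.fun_neg.fun_div hden htz).congr_deriv ?_
  have : (t : ℂ) ≠ 0 := ofReal_ne_zero.mpr ht
  field_simp
  ring

lemma ne_zero_of_mem_uIcc {b c t : ℝ} (hb : 0 < b) (hc : 0 < c) (ht : t ∈ Set.uIcc b c) :
    t ≠ 0 :=
  (lt_of_lt_of_le (lt_min hb hc) ht.1).ne'

lemma integral_mul_cexp_neg_sq_eq {z : ℂ} (hz : z ≠ 0) {b c : ℝ} (hb : 0 < b) (hc : 0 < c) :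
    ∫ t in b..c, z * exp (-((t : ℂ) * z) ^ 2)
      = exp (-((b : ℂ) * z) ^ 2) / (2 * b * z) - exp (-((c : ℂ) * z) ^ 2) / (2 * c * z)
        - ∫ t in b..c, exp (-((t : ℂ) * z) ^ 2) / (2 * t ^ 2 * z) := by
  have hint : IntervalIntegrable (fun t : ℝ => z * exp (-((t : ℂ) * z) ^ 2))
      MeasureTheory.volume b c :=
    (by fun_prop : Continuous _).intervalIntegrable _ _
  have hint' : IntervalIntegrable (fun t : ℝ => exp (-((t : ℂ) * z) ^ 2) / (2 * t ^ 2 * z))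
      MeasureTheory.volume b c := by
    refine ContinuousOn.intervalIntegrable (ContinuousOn.div (by fun_prop) (by fun_prop) ?_)
    intro t ht
    simp [hz, ne_zero_of_mem_uIcc hb hc ht]
  have hftc := integral_eq_sub_of_hasDerivAt
    (fun t ht => hasDerivAt_neg_cexp_neg_sq_div hz (ne_zero_of_mem_uIcc hb hc ht))
    (hint.add hint')
  rw [integral_add hint hint'] at hftc
  linear_combination hftc

lemma CErfc_eq_integral_by_parts {z : ℂ} (hz : z ≠ 0) {c : ℝ} (hc : 0 < c) :
    CErfc z = exp (-((1 : ℝ) * z) ^ 2) / (2 * (1 : ℝ) * z)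
      + ((Real.sqrt Real.pi : ℂ) / 2 - (∫ t in (0 : ℝ)..c, z * exp (-((t : ℂ) * z) ^ 2))
        - exp (-((c : ℂ) * z) ^ 2) / (2 * c * z)
        + ∫ t in c..1, exp (-((t : ℂ) * z) ^ 2) / (2 * t ^ 2 * z)) := by
  have hint (u v : ℝ) : IntervalIntegrable (fun t : ℝ => z * exp (-((t : ℂ) * z) ^ 2))
      MeasureTheory.volume u v := (by fun_prop : Continuous _).intervalIntegrable _ _
  rw [CErfc, ← integral_add_adjacent_intervals (hint 0 c) (hint c 1),
    integral_mul_cexp_neg_sq_eq hz hc one_pos]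
  ring

lemma norm_cexp_neg_sq (z : ℂ) (t : ℝ) :
    ‖exp (-((t : ℂ) * z) ^ 2)‖ = Real.exp (t ^ 2 * -(z ^ 2).re) := by
  rw [norm_exp, show -((t : ℂ) * z) ^ 2 = ((t ^ 2 : ℝ) : ℂ) * -z ^ 2 by push_cast; ring,
    re_ofReal_mul, neg_re]

lemma norm_cexp_neg_sq_div (z : ℂ) {t : ℝ} (ht : 0 < t) :
    ‖exp (-((t : ℂ) * z) ^ 2) / (2 * t * z)‖
      = Real.exp (t ^ 2 * -(z ^ 2).re) / (2 * t * ‖z‖) := by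
  rw [norm_div, norm_cexp_neg_sq, norm_mul, norm_mul, norm_real, Real.norm_of_nonneg ht.le,
    norm_ofNat]

lemma norm_integral_mul_cexp_neg_sq_le (z : ℂ) (ha : 0 ≤ -(z ^ 2).re) {c : ℝ} (hc : 0 ≤ c) :
    ‖∫ t in (0 : ℝ)..c, z * exp (-((t : ℂ) * z) ^ 2)‖
      ≤ ‖z‖ * Real.exp (c ^ 2 * -(z ^ 2).re) * c := by
  have hbound : ∀ t ∈ Set.uIoc 0 c,
      ‖z * exp (-((t : ℂ) * z) ^ 2)‖ ≤ ‖z‖ * Real.exp (c ^ 2 * -(z ^ 2).re) := by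
    intro t ht
    rw [Set.uIoc_of_le hc] at ht
    rw [norm_mul, norm_cexp_neg_sq]
    gcongr
    · exact ht.1.le
    · exact ht.2
  simpa [abs_of_nonneg hc] using norm_integral_le_of_norm_le_const hbound

lemma norm_integral_cexp_neg_sq_div_le (z : ℂ) (ha : 0 ≤ -(z ^ 2).re) {c : ℝ} (hc : 0 < c)
    (hc1 : c ≤ 1) :
    ‖∫ t in c..1, exp (-((t : ℂ) * z) ^ 2) / (2 * t ^ 2 * z)‖
      ≤ Real.exp (-(z ^ 2).re) / (2 * c ^ 2 * ‖z‖) * (1 - c) := by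
  have hbound : ∀ t ∈ Set.uIoc c 1, ‖exp (-((t : ℂ) * z) ^ 2) / (2 * t ^ 2 * z)‖
      ≤ Real.exp (-(z ^ 2).re) / (2 * c ^ 2 * ‖z‖) := by
    intro t ht
    rw [Set.uIoc_of_le hc1] at ht
    have ht0 : 0 < t := hc.trans ht.1
    rw [norm_div, norm_cexp_neg_sq, norm_mul, norm_mul, norm_pow, norm_real,
      Real.norm_of_nonneg ht0.le]
    rcases eq_or_ne z 0 with rfl | hz0
    · simp
    rw [norm_ofNat]
    gcongr
    · exact mul_le_of_le_one_left ha (pow_le_one₀ ht0.le ht.2)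
    · exact ht.1.le
  simpa [abs_of_nonneg (sub_nonneg.2 hc1)] using norm_integral_le_of_norm_le_const hbound

lemma norm_sub_sum_norm_le_norm_add {E : Type*} [SeminormedAddCommGroup E] (a b c d e : E) :
    ‖a‖ - (‖b‖ + ‖c‖ + ‖d‖ + ‖e‖) ≤ ‖a + (b - c - d + e)‖ := by
  linarith [norm_sub_le_norm_add a (b - c - d + e), norm_add_le (b - c - d) e,
    norm_sub_le (b - c) d, norm_sub_le b c]

lemma norm_CErfc_ge {z : ℂ} (hz : 1 ≤ ‖z‖) (ha : 0 ≤ -(z ^ 2).re) :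
    5 / 18 * (Real.exp (-(z ^ 2).re) / ‖z‖) - 2 * ‖z‖ * Real.exp (9 / 16 * -(z ^ 2).re)
      - Real.sqrt Real.pi / 2 ≤ ‖CErfc z‖ := by
  have hz0 : z ≠ 0 := norm_pos_iff.1 (one_pos.trans_le hz)
  have hc : (0 : ℝ) < 3 / 4 := by norm_num
  have hdom : ‖exp (-((1 : ℝ) * z) ^ 2) / (2 * (1 : ℝ) * z)‖
      = 1 / 2 * (Real.exp (-(z ^ 2).re) / ‖z‖) := by
    rw [norm_cexp_neg_sq_div z one_pos]; ring_nf
  have hpi : ‖(Real.sqrt Real.pi : ℂ) / 2‖ = Real.sqrt Real.pi / 2 := by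
    rw [norm_div, norm_real, Real.norm_of_nonneg (Real.sqrt_nonneg _), norm_ofNat]
  have hhead : ‖∫ t in (0 : ℝ)..3 / 4, z * exp (-((t : ℂ) * z) ^ 2)‖
      ≤ 3 / 4 * (‖z‖ * Real.exp (9 / 16 * -(z ^ 2).re)) := by
    refine (norm_integral_mul_cexp_neg_sq_le z ha hc.le).trans_eq ?_; ring_nf
  have htail : ‖exp (-(((3 / 4 : ℝ) : ℂ) * z) ^ 2) / (2 * ((3 / 4 : ℝ) : ℂ) * z)‖
      = 2 / 3 * (Real.exp (9 / 16 * -(z ^ 2).re) / ‖z‖) := by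
    rw [norm_cexp_neg_sq_div z hc]; ring_nf
  have hrem : ‖∫ t in (3 / 4 : ℝ)..1, exp (-((t : ℂ) * z) ^ 2) / (2 * t ^ 2 * z)‖
      ≤ 2 / 9 * (Real.exp (-(z ^ 2).re) / ‖z‖) := by
    refine (norm_integral_cexp_neg_sq_div_le z ha hc (by norm_num)).trans_eq ?_; ring_nf
  have hY : Real.exp (9 / 16 * -(z ^ 2).re) / ‖z‖ ≤ ‖z‖ * Real.exp (9 / 16 * -(z ^ 2).re) :=
    (div_le_self (Real.exp_pos _).le hz).trans (le_mul_of_one_le_left (Real.exp_pos _).le hz)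
  have hY0 : 0 ≤ ‖z‖ * Real.exp (9 / 16 * -(z ^ 2).re) := by positivity
  rw [CErfc_eq_integral_by_parts hz0 hc]
  refine le_trans ?_ (norm_sub_sum_norm_le_norm_add _ _ _ _ _)
  rw [hdom, hpi, htail]
  linarith

lemma sin_two_mul_mul_sq_le_neg_re_sq {z : ℂ} {ε : ℝ} (hε : 0 ≤ ε)
    (harg : |arg z - Real.pi / 2| ≤ Real.pi / 4 - ε) :
    Real.sin (2 * ε) * ‖z‖ ^ 2 ≤ -(z ^ 2).re := by
  have hre : (z ^ 2).re = ‖z‖ ^ 2 * Real.cos (2 * arg z) := by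
    rw [sq z, mul_re, ← norm_mul_cos_arg z, ← norm_mul_sin_arg z, Real.cos_two_mul']
    ring
  have hcos : -Real.cos (2 * arg z) = Real.cos |2 * (arg z - Real.pi / 2)| := by
    rw [Real.cos_abs, ← Real.cos_sub_pi]
    ring_nf
  have hsin : Real.sin (2 * ε) ≤ -Real.cos (2 * arg z) := by
    rw [hcos, ← Real.cos_pi_div_two_sub]
    refine Real.cos_le_cos_of_nonneg_of_le_pi (abs_nonneg _) (by linarith [Real.pi_pos]) ?_
    rw [abs_mul, abs_two]
    linarith
  rw [hre]
  nlinarith [sq_nonneg ‖z‖]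

lemma eventually_le_exp_div_sub {s : ℝ} (hs : 0 < s) (M : ℝ) :
    ∀ᶠ r in atTop, ∀ a, s * r ^ 2 ≤ a →
      M ≤ 5 / 18 * (Real.exp a / r) - 2 * r * Real.exp (9 / 16 * a) := by
  have hdecay :
      Tendsto (fun r : ℝ => r ^ 2 * Real.exp (-(7 / 16 * s) * r ^ 2)) atTop (𝓝 0) := by
    simpa [Function.comp_def] using
      (tendsto_rpow_mul_exp_neg_mul_atTop_nhds_zero 1 (7 / 16 * s) (by positivity)).comp
        (tendsto_pow_atTop two_ne_zero)
  have hgrowth : Tendsto (fun r : ℝ => Real.exp (s * r ^ 2) / r) atTop atTop := by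
    refine tendsto_atTop_mono' _ ?_ (tendsto_exp_mul_div_rpow_atTop 1 s hs)
    filter_upwards [eventually_ge_atTop 1] with r hr
    rw [Real.rpow_one]
    gcongr
    nlinarith
  filter_upwards [eventually_ge_atTop 1,
    hdecay.eventually (ge_mem_nhds (by norm_num : (0 : ℝ) < 5 / 72)),
    hgrowth.eventually_ge_atTop (36 / 5 * M)] with r hr hsmall hbig a ha
  have hr0 : 0 < r := one_pos.trans_le hr
  have hsq : r ^ 2 ≤ 5 / 72 * Real.exp (7 / 16 * a) := by
    calc r ^ 2
        = r ^ 2 * Real.exp (-(7 / 16 * s) * r ^ 2) * Real.exp (7 / 16 * (s * r ^ 2)) := by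
          rw [mul_assoc, ← Real.exp_add]; ring_nf; simp
      _ ≤ 5 / 72 * Real.exp (7 / 16 * a) := by gcongr
  have hgap : 2 * r * Real.exp (9 / 16 * a) ≤ 5 / 36 * (Real.exp a / r) := by
    rw [show Real.exp a = Real.exp (9 / 16 * a) * Real.exp (7 / 16 * a) by
      rw [← Real.exp_add]; ring_nf, mul_div_assoc', le_div_iff₀ hr0]
    nlinarith [Real.exp_pos (9 / 16 * a)]
  have hmono : Real.exp (s * r ^ 2) / r ≤ Real.exp a / r := by gcongr
  linarith

/-- `|Erfc(z)| → +∞` as `z → ∞` in the sector `π/4 + ε < arg z ≤ π/2`. -/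
theorem statement19 :
    ∀ ε : ℝ, 0 < ε → ε < Real.pi / 4 →
      ∀ M : ℝ, 0 < M → ∃ R > (0:ℝ), ∀ z : ℂ, R ≤ ‖z‖ →
        Real.pi / 4 + ε < Complex.arg z → Complex.arg z ≤ Real.pi / 2 →
        M ≤ ‖CErfc z‖ := by
  intro ε hε hεπ M _
  have hs : 0 < Real.sin (2 * ε) :=
    Real.sin_pos_of_pos_of_lt_pi (by linarith) (by linarith [Real.pi_pos])
  obtain ⟨R, hR⟩ :=
    eventually_atTop.1 (eventually_le_exp_div_sub hs (M + Real.sqrt Real.pi / 2))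
  refine ⟨max R 1, by positivity, fun z hz harg₁ harg₂ => ?_⟩
  have hsector : Real.sin (2 * ε) * ‖z‖ ^ 2 ≤ -(z ^ 2).re :=
    sin_two_mul_mul_sq_le_neg_re_sq hε.le (abs_le.2 ⟨by linarith, by linarith⟩)
  have hbound := norm_CErfc_ge (le_of_max_le_right hz) (le_trans (by positivity) hsector)
  linarith [hR ‖z‖ (le_of_max_le_left hz) _ hsector]
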